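/- arXiv:1710.08025 — 3 statements merged into one kernel-verified Lean document; each statement's English description precedes it below -/
import Mathlib

section
/- For positive integers s and u with s ≥ 2u - 1, we have C(s-u, u) / C(s, u) ≥ 1 - u²/(s - u + 1). -/
/-!
Writing `C(s-u,u) / C(s,u) = ∏_{i<u} (1 - u/(s-i))`, every factor is at least `1 - u/(s-u+1)`,
which lies in `[0, 1]` because `2u ≤ s + 1`; Bernoulli's inequality then bounds the `u`-th
power of this common lower bound from below by `1 - u²/(s-u+1)`.
-/

open Finset

theorem Nat.cast_choose_div_cast_choose {K : Type*} [Field K] [CharZero K] (m n k : ℕ) :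
    (m.choose k : K) / n.choose k = ∏ i ∈ range k, ((m - i : K) / (n - i)) := by
  rw [Nat.cast_choose_eq_descPochhammer_div, Nat.cast_choose_eq_descPochhammer_div,
    descPochhammer_eval_eq_prod_range, descPochhammer_eval_eq_prod_range,
    div_div_div_cancel_right₀ (Nat.cast_ne_zero.2 k.factorial_ne_zero), prod_div_distrib]

theorem one_sub_div_le_sub_div_self {K : Type*} [Field K] [LinearOrder K] [IsStrictOrderedRing K]
    {a b c : K} (ha : 0 ≤ a) (hb : 0 < b) (hbc : b ≤ c) : 1 - a / b ≤ (c - a) / c := by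
  rw [sub_div, div_self (hb.trans_le hbc).ne']
  exact sub_le_sub_left (div_le_div_of_nonneg_left ha hb hbc) 1

theorem stmt_0_general (s u : ℕ) (h : 2 * u - 1 ≤ s) :
    (1 : ℝ) - (u : ℝ) ^ 2 / ((s : ℝ) - u + 1) ≤ ((s - u).choose u : ℝ) / (s.choose u : ℝ) := by
  have h2u : (2 * u : ℝ) ≤ s + 1 := by exact_mod_cast (by omega : 2 * u ≤ s + 1)
  have hpos : (0 : ℝ) < s - u + 1 := by linarith [u.cast_nonneg (α := ℝ)]
  set x : ℝ := u / (s - u + 1)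
  have hx : x ≤ 1 := (div_le_one hpos).2 (by linarith)
  have hfactor (i : ℕ) (hi : i ∈ range u) : 1 - x ≤ ((s - u : ℕ) - i : ℝ) / (s - i) := by
    have hiu : (i : ℝ) + 1 ≤ u := by exact_mod_cast mem_range.1 hi
    rw [Nat.cast_sub (by omega), sub_right_comm]
    exact one_sub_div_le_sub_div_self u.cast_nonneg hpos (by linarith)
  calc (1 : ℝ) - u ^ 2 / (s - u + 1) = 1 + u * -x := by ring
    _ ≤ (1 + -x) ^ u := one_add_mul_le_pow (by linarith [div_nonneg u.cast_nonneg hpos.le]) u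
    _ = ∏ _i ∈ range u, (1 - x) := by rw [prod_const, card_range, sub_eq_add_neg]
    _ ≤ ∏ i ∈ range u, (((s - u : ℕ) - i : ℝ) / (s - i)) :=
      prod_le_prod (fun _ _ => sub_nonneg.2 hx) hfactor
    _ = ((s - u).choose u : ℝ) / (s.choose u : ℝ) := (Nat.cast_choose_div_cast_choose _ _ _).symm

theorem stmt_0 (s u : ℕ) (hs : 0 < s) (hu : 0 < u) (h : 2 * u - 1 ≤ s) :
    (1 : ℝ) - (u : ℝ) ^ 2 / ((s : ℝ) - u + 1) ≤ ((s - u).choose u : ℝ) / (s.choose u : ℝ) :=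
  stmt_0_general s u h
end

section
/- If H is a graph in which every edge lies in a triangle and t ≥ e(H), then sat_t(n, R(H)) ≥ (1/(4t) + o(1)) · n log n. -/
open SimpleGraph

/-- `(G, c)` contains a rainbow copy of `H`: there is a graph embedding of `H` into `G`
whose edges receive pairwise distinct colours. -/
def HasRainbowCopy {W V : Type*} (H : SimpleGraph W) (G : SimpleGraph V)
    (c : Sym2 V → ℕ) : Prop :=
  ∃ f : H ↪g G, ∀ e₁ ∈ H.edgeSet, ∀ e₂ ∈ H.edgeSet,
    c (Sym2.map f e₁) = c (Sym2.map f e₂) → e₁ = e₂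

/-- `(G, c)` is `R(H)`-saturated with palette `{1, …, t}`: colours of edges lie in
`{1, …, t}`, there is no rainbow copy of `H`, and adding any non-edge in any colour
from `{1, …, t}` creates a rainbow copy of `H`. -/
def IsRainbowSat {W V : Type*} [DecidableEq V] (H : SimpleGraph W) (t : ℕ) (G : SimpleGraph V)
    (c : Sym2 V → ℕ) : Prop :=
  (∀ e ∈ G.edgeSet, c e ∈ Finset.Icc 1 t) ∧
  ¬ HasRainbowCopy H G c ∧
  ∀ x y : V, x ≠ y → ¬ G.Adj x y → ∀ i ∈ Finset.Icc 1 t,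
    HasRainbowCopy H (G ⊔ SimpleGraph.fromEdgeSet {s(x, y)})
      (fun e => if e = s(x, y) then i else c e)

/-- `sat_t(n, R(H))`: the minimum number of edges in an `R(H)`-saturated
`t`-edge-coloured graph on `n` vertices. -/
noncomputable def rainbowSatNum {W : Type*} (H : SimpleGraph W) (t n : ℕ) : ℕ :=
  sInf { m | ∃ (G : SimpleGraph (Fin n)) (c : Sym2 (Fin n) → ℕ),
    IsRainbowSat H t G c ∧ Nat.card G.edgeSet = m }

/-- `(G, c)` is `R(H)`-saturated with an unbounded palette `ℕ`. -/
def IsRainbowSatInf {W V : Type*} [DecidableEq V] (H : SimpleGraph W) (G : SimpleGraph V)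
    (c : Sym2 V → ℕ) : Prop :=
  ¬ HasRainbowCopy H G c ∧
  ∀ x y : V, x ≠ y → ¬ G.Adj x y → ∀ i : ℕ,
    HasRainbowCopy H (G ⊔ SimpleGraph.fromEdgeSet {s(x, y)})
      (fun e => if e = s(x, y) then i else c e)

/-- `sat(n, R(H))`: the rainbow saturation number with an unbounded palette. -/
noncomputable def rainbowSatNumInf {W : Type*} (H : SimpleGraph W) (n : ℕ) : ℕ :=
  sInf { m | ∃ (G : SimpleGraph (Fin n)) (c : Sym2 (Fin n) → ℕ),
    IsRainbowSatInf H G c ∧ Nat.card G.edgeSet = m }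



/-!
Let `(G, c)` be saturated and `uv` a non-edge. Adding `uv` in colour `1` creates a rainbow copy of
`H`, which must use `uv`; a triangle of `H` through the preimage of `uv` gives a common neighbour
`w` of `u` and `v` with `c(uw) ≠ c(vw)`. So on an independent set of vertices of degree `≤ k` the
colourings of the neighbourhoods are pairwise incompatible partial maps into `{1, …, t}`, and there
are at most `t ^ k` of them. A maximal independent set among the vertices of degree `≤ k` dominates
them, so there are at most `(k + 1) t ^ k` such vertices, and summing degrees gives
`(k + 1) n ≤ 2 e(G) + (k + 1)² t ^ k`. Taking `k = ⌊log n / 2t⌋` makes the error term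
`O(log² n · √n)`.
-/

open Finset

theorem card_le_pow_of_pairwise_disagree {ι α β : Type*} [Fintype α] [DecidableEq α]
    [DecidableEq β] {K : Finset β} (hK : K.Nonempty) {I : Finset ι} {N : ι → Finset α}
    {g : ι → α → β} {d : ℕ} (hg : ∀ i ∈ I, ∀ a ∈ N i, g i a ∈ K) (hN : ∀ i ∈ I, #(N i) ≤ d)
    (hdis : (I : Set ι).Pairwise fun i j ↦ ∃ a ∈ N i, a ∈ N j ∧ g i a ≠ g j a) :
    #I ≤ #K ^ d := by
  -- `i` owns the `#K ^ (|α| - #(N i))` maps `α → K` extending `g i`; these sets are disjoint.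
  set F : ι → Finset (α → β) := fun i ↦
    Fintype.piFinset fun a ↦ if a ∈ N i then {g i a} else K
  have hFsub : ∀ i ∈ I, F i ⊆ Fintype.piFinset fun _ ↦ K := fun i hi σ hσ ↦ by
    simp only [F, Fintype.mem_piFinset] at hσ ⊢
    intro a
    specialize hσ a
    split_ifs at hσ with ha
    · exact mem_singleton.1 hσ ▸ hg i hi a ha
    · exact hσ
  have hFcard : ∀ i ∈ I, #K ^ Fintype.card α ≤ #(F i) * #K ^ d := fun i hi ↦ by
    have : #(F i) = #K ^ (Fintype.card α - #(N i)) := by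
      simp only [F, Fintype.card_piFinset, apply_ite card, card_singleton, prod_ite,
        prod_const_one, one_mul, prod_const, ← card_compl, compl_eq_univ_sdiff, filter_not,
        filter_mem_eq_inter, univ_inter]
    rw [this, ← pow_add]
    exact Nat.pow_le_pow_right hK.card_pos (by have := card_le_univ (N i); have := hN i hi; omega)
  have hdisj : (I : Set ι).PairwiseDisjoint F := fun i hi j hj hij ↦ by
    obtain ⟨a, hai, haj, hne⟩ := hdis hi hj hij
    refine disjoint_left.2 fun σ hσi hσj ↦ hne ?_
    have hσi := Fintype.mem_piFinset.1 hσi a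
    have hσj := Fintype.mem_piFinset.1 hσj a
    simp only [hai, haj, if_true, mem_singleton] at hσi hσj
    exact hσi.symm.trans hσj
  have hunion : ∑ i ∈ I, #(F i) ≤ #K ^ Fintype.card α := by
    rw [← card_biUnion hdisj]
    calc _ ≤ #(Fintype.piFinset fun _ : α ↦ K) := card_le_card (biUnion_subset.2 hFsub)
      _ = _ := by rw [Fintype.card_piFinset, prod_const, card_univ]
  refine Nat.le_of_mul_le_mul_right ?_ (pow_pos hK.card_pos (Fintype.card α))
  calc #I * #K ^ Fintype.card α ≤ ∑ i ∈ I, #(F i) * #K ^ d := by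
        rw [← smul_eq_mul, ← sum_const]; exact sum_le_sum hFcard
    _ = (∑ i ∈ I, #(F i)) * #K ^ d := (sum_mul ..).symm
    _ ≤ #K ^ Fintype.card α * #K ^ d := Nat.mul_le_mul_right _ hunion
    _ = #K ^ d * #K ^ Fintype.card α := Nat.mul_comm ..

namespace SimpleGraph

theorem adj_of_adj_sup_fromEdgeSet {V : Type*} {G : SimpleGraph V} {u v x y : V}
    (h : (G ⊔ fromEdgeSet {s(u, v)}).Adj x y) (hxy : s(x, y) ≠ s(u, v)) : G.Adj x y := by
  simpa [hxy] using h

variable {V : Type*} [Fintype V] [DecidableEq V] (G : SimpleGraph V) [DecidableRel G.Adj]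

/-- A maximal independent subset of `A` dominates `A`. -/
theorem exists_isIndepSet_subset_card_le (A : Finset V) {D : ℕ}
    (hD : ∀ v ∈ A, G.degree v ≤ D) :
    ∃ I ⊆ A, G.IsIndepSet (I : Set V) ∧ #A ≤ (D + 1) * #I := by
  obtain ⟨I, -, hImax⟩ :=
    (A.powerset.filter fun I : Finset V ↦ G.IsIndepSet (I : Set V)).exists_le_maximal
      (a := ∅) (by simp)
  simp only [mem_filter, mem_powerset] at hImax
  obtain ⟨⟨hIA, hIind⟩, hImax⟩ := hImax
  refine ⟨I, hIA, hIind, ?_⟩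
  have hdom : A ⊆ I.biUnion fun v ↦ insert v (G.neighborFinset v) := fun x hx ↦ by
    by_contra hxI
    simp only [mem_biUnion, mem_insert, mem_neighborFinset, not_exists, not_and, not_or] at hxI
    have hindep : G.IsIndepSet (insert x I : Finset V) := by
      rw [coe_insert]
      exact hIind.insert fun v hv _ ↦ ⟨fun hxv ↦ (hxI v hv).2 hxv.symm, (hxI v hv).2⟩
    have hxI_mem := hImax ⟨insert_subset hx hIA, hindep⟩ (subset_insert x I) (mem_insert_self x I)
    exact (hxI x hxI_mem).1 rfl
  calc #A ≤ ∑ v ∈ I, #(insert v (G.neighborFinset v)) :=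
        (card_le_card hdom).trans card_biUnion_le
    _ ≤ ∑ _v ∈ I, (D + 1) := sum_le_sum fun v hv ↦ (card_insert_le _ _).trans
        (by rw [card_neighborFinset_eq_degree]; exact Nat.succ_le_succ (hD v (hIA hv)))
    _ = (D + 1) * #I := by rw [sum_const, smul_eq_mul, mul_comm]

end SimpleGraph

section Rainbow

variable {W V : Type*} {H : SimpleGraph W}

theorem hasRainbowCopy_of_sup_fromEdgeSet [DecidableEq V] {G : SimpleGraph V}
    {c : Sym2 V → ℕ} {u v : V} {i : ℕ} (f : H ↪g G ⊔ fromEdgeSet {s(u, v)})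
    (hf : ∀ e₁ ∈ H.edgeSet, ∀ e₂ ∈ H.edgeSet,
      (fun e ↦ if e = s(u, v) then i else c e) (Sym2.map f e₁) =
        (fun e ↦ if e = s(u, v) then i else c e) (Sym2.map f e₂) → e₁ = e₂)
    (hoff : ∀ a b, H.Adj a b → s(f a, f b) ≠ s(u, v)) : HasRainbowCopy H G c := by
  refine ⟨⟨f.toEmbedding, fun {a b} ↦ ⟨fun h ↦ f.map_adj_iff.1 (Or.inl h),
    fun h ↦ adj_of_adj_sup_fromEdgeSet (f.map_adj_iff.2 h) (hoff a b h)⟩⟩, ?_⟩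
  have hoff' : ∀ e ∈ H.edgeSet, Sym2.map f e ≠ s(u, v) :=
    fun e ↦ e.ind fun a b hab ↦ hoff a b hab
  intro e₁ he₁ e₂ he₂ hc
  exact hf e₁ he₁ e₂ he₂ (by simpa [hoff' e₁ he₁, hoff' e₂ he₂] using hc)

theorem IsRainbowSat.exists_adj_adj_color_ne [DecidableEq V] {t : ℕ} {G : SimpleGraph V}
    {c : Sym2 V → ℕ} (htri : ∀ x y : W, H.Adj x y → ∃ z, H.Adj x z ∧ H.Adj y z)
    (hsat : IsRainbowSat H t G c) (ht : 0 < t) {u v : V} (huv : u ≠ v) (hna : ¬G.Adj u v) :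
    ∃ w, G.Adj u w ∧ G.Adj v w ∧ c s(u, w) ≠ c s(v, w) := by
  obtain ⟨f, hf⟩ := hsat.2.2 u v huv hna 1 (mem_Icc.2 ⟨le_rfl, ht⟩)
  by_cases huv_mem : ∃ a b, H.Adj a b ∧ f a = u ∧ f b = v
  · obtain ⟨a, b, hab, hu, hv⟩ := huv_mem
    obtain ⟨z, haz, hbz⟩ := htri a b hab
    have hfab : s(f a, f b) = s(u, v) := by rw [hu, hv]
    have haz' : s(f a, f z) ≠ s(u, v) := fun h ↦
      f.injective.ne hbz.ne' (Sym2.congr_right.1 (h.trans hfab.symm))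
    have hbz' : s(f b, f z) ≠ s(u, v) := fun h ↦
      f.injective.ne haz.ne' (Sym2.congr_right.1 (h.trans (Sym2.eq_swap.trans hfab).symm))
    -- `u` and `v` occur in the type of `f`, so they cannot be substituted away
    suffices ∃ w, G.Adj (f a) w ∧ G.Adj (f b) w ∧ c s(f a, w) ≠ c s(f b, w) by
      rwa [hu, hv] at this
    refine ⟨f z, adj_of_adj_sup_fromEdgeSet (f.map_adj_iff.2 haz) haz',
      adj_of_adj_sup_fromEdgeSet (f.map_adj_iff.2 hbz) hbz', fun hc ↦ hab.ne ?_⟩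
    refine Sym2.congr_left.1 (hf s(a, z) haz s(b, z) hbz ?_)
    simp [haz', hbz', hc]
  · refine (hsat.2.1 (hasRainbowCopy_of_sup_fromEdgeSet f hf fun a b hab h ↦ ?_)).elim
    rcases Sym2.eq_iff.1 h with ⟨hu, hv⟩ | ⟨hv, hu⟩
    exacts [huv_mem ⟨a, b, hab, hu, hv⟩, huv_mem ⟨b, a, hab.symm, hu, hv⟩]

theorem not_hasRainbowCopy_bot (hne : H.edgeSet.Nonempty) (c : Sym2 V → ℕ) :
    ¬HasRainbowCopy H (⊥ : SimpleGraph V) c := fun ⟨f, _⟩ ↦ by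
  obtain ⟨e, he⟩ := hne
  simpa using f.map_mem_edgeSet_iff.2 he

/-- Take a graph maximal among those admitting a rainbow-`H`-free colouring from `{1, …, t}`. -/
theorem exists_isRainbowSat [Finite V] [DecidableEq V] (hne : H.edgeSet.Nonempty) (t : ℕ) :
    ∃ (G : SimpleGraph V) (c : Sym2 V → ℕ), IsRainbowSat H t G c := by
  obtain ⟨G, -, ⟨c, hc, hG⟩, hmax⟩ := Finite.exists_le_maximal
    (p := fun G : SimpleGraph V ↦ ∃ c : Sym2 V → ℕ,
      (∀ e ∈ G.edgeSet, c e ∈ Icc 1 t) ∧ ¬HasRainbowCopy H G c)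
    (a := ⊥) ⟨fun _ ↦ 1, by simp, not_hasRainbowCopy_bot hne _⟩
  refine ⟨G, c, hc, hG, fun x y hxy hna i hi ↦ by_contra fun hno ↦ hna ?_⟩
  refine hmax ⟨_, fun e he ↦ ?_, hno⟩ le_sup_left (by simp [hxy])
  split_ifs with hex
  · exact hi
  · exact hc e (by simpa [hex] using he)

theorem exists_isRainbowSat_card_eq (hne : H.edgeSet.Nonempty) (t n : ℕ) :
    ∃ (G : SimpleGraph (Fin n)) (c : Sym2 (Fin n) → ℕ),
      IsRainbowSat H t G c ∧ Nat.card G.edgeSet = rainbowSatNum H t n := by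
  obtain ⟨G, c, hsat⟩ := exists_isRainbowSat (V := Fin n) hne t
  exact Nat.sInf_mem (s := {m | ∃ (G : SimpleGraph (Fin n)) (c : Sym2 (Fin n) → ℕ),
    IsRainbowSat H t G c ∧ Nat.card G.edgeSet = m}) ⟨_, G, c, hsat, rfl⟩

namespace IsRainbowSat

variable [Fintype V] [DecidableEq V] {t : ℕ} {G : SimpleGraph V} {c : Sym2 V → ℕ}

theorem card_degree_le_le [DecidableRel G.Adj]
    (htri : ∀ x y : W, H.Adj x y → ∃ z, H.Adj x z ∧ H.Adj y z) (hsat : IsRainbowSat H t G c)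
    (ht : 0 < t) (k : ℕ) : #{v | G.degree v ≤ k} ≤ (k + 1) * t ^ k := by
  obtain ⟨I, hIA, hIind, hAI⟩ := G.exists_isIndepSet_subset_card_le {v | G.degree v ≤ k}
    (D := k) fun v hv ↦ (mem_filter.1 hv).2
  have hI : #I ≤ #(Icc 1 t) ^ k := by
    refine card_le_pow_of_pairwise_disagree (N := fun v ↦ G.neighborFinset v)
      (g := fun v w ↦ c s(v, w)) (nonempty_Icc.2 ht)
      (fun v _ w hw ↦ hsat.1 _ ((mem_neighborFinset ..).1 hw))
      (fun v hv ↦ (card_neighborFinset_eq_degree G v).trans_le (mem_filter.1 (hIA hv)).2)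
      fun u hu v hv huv ↦ ?_
    obtain ⟨w, huw, hvw, hne⟩ := hsat.exists_adj_adj_color_ne htri ht huv (hIind hu hv huv)
    exact ⟨w, (mem_neighborFinset ..).2 huw, (mem_neighborFinset ..).2 hvw, hne⟩
  rw [Nat.card_Icc, Nat.add_sub_cancel] at hI
  exact hAI.trans (Nat.mul_le_mul_left _ hI)

theorem mul_card_le (htri : ∀ x y : W, H.Adj x y → ∃ z, H.Adj x z ∧ H.Adj y z)
    (hsat : IsRainbowSat H t G c) (ht : 0 < t) (k : ℕ) :
    (k + 1) * Fintype.card V ≤ 2 * Nat.card G.edgeSet + (k + 1) ^ 2 * t ^ k := by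
  classical
  calc (k + 1) * Fintype.card V = ∑ _v, (k + 1) := by simp [mul_comm]
    _ ≤ ∑ v, (G.degree v + if G.degree v ≤ k then k + 1 else 0) :=
        sum_le_sum fun v _ ↦ by split_ifs <;> omega
    _ = 2 * Nat.card G.edgeSet + #{v | G.degree v ≤ k} * (k + 1) := by
        rw [sum_add_distrib, sum_degrees_eq_twice_card_edges, ← sum_filter, sum_const,
          smul_eq_mul, Nat.card_eq_fintype_card, edgeFinset_card]
    _ ≤ 2 * Nat.card G.edgeSet + (k + 1) ^ 2 * t ^ k := by
        have := hsat.card_degree_le_le htri ht k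
        rw [sq, mul_assoc]
        exact Nat.add_le_add_left (by nlinarith) _

end IsRainbowSat

end Rainbow

section Asymptotics

open Real Filter Topology

theorem pow_le_sqrt_of_le_logb_div {t k : ℕ} {x : ℝ} (ht : 0 < t) (hx : 0 < x)
    (hk : (k : ℝ) ≤ logb 2 x / (2 * t)) : (t : ℝ) ^ k ≤ √x := by
  have htk : ((t * k : ℕ) : ℝ) ≤ logb 2 x / 2 := by
    rw [le_div_iff₀ (by positivity)] at hk
    push_cast; nlinarith
  calc (t : ℝ) ^ k ≤ ((2 : ℝ) ^ t) ^ k := by gcongr; exact_mod_cast (Nat.lt_two_pow_self).le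
    _ = (2 : ℝ) ^ ((t * k : ℕ) : ℝ) := by rw [rpow_natCast, pow_mul]
    _ ≤ (2 : ℝ) ^ (logb 2 x / 2) := rpow_le_rpow_of_exponent_le (by norm_num) htk
    _ = √x := by
      rw [sqrt_eq_rpow, div_eq_mul_one_div, rpow_mul zero_le_two,
        rpow_logb two_pos (by norm_num) hx]

theorem mul_logb_le_of_forall_succ_mul_le {t n m : ℕ} (ht : 0 < t)
    (h : ∀ k : ℕ, (k + 1) * n ≤ 2 * m + (k + 1) ^ 2 * t ^ k) :
    (1 / (4 * (t : ℝ)) - 2 * logb 2 n / √n) * (n * logb 2 n) ≤ m := by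
  rcases lt_or_ge n 2 with hn | hn
  · interval_cases n <;> simp
  set L := logb 2 n
  have hnpos : (0 : ℝ) < n := by positivity
  have htR : (1 : ℝ) ≤ t := by exact_mod_cast ht
  have hL : 1 ≤ L := by
    rw [le_logb_iff_rpow_le one_lt_two hnpos, rpow_one]; exact_mod_cast hn
  set k := ⌊L / (2 * t)⌋₊
  have hk : (k : ℝ) ≤ L / (2 * t) := Nat.floor_le (by positivity)
  have hkL : (k : ℝ) + 1 ≤ 2 * L := by
    have : L / (2 * t) ≤ L / 2 := div_le_div_of_nonneg_left (by linarith) two_pos (by linarith)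
    linarith
  have hpow : (t : ℝ) ^ k ≤ √n := pow_le_sqrt_of_le_logb_div ht hnpos hk
  have hkn : ((k : ℝ) + 1) * n ≤ 2 * m + ((k : ℝ) + 1) ^ 2 * t ^ k := by exact_mod_cast h k
  have hL2t : L / (2 * t) * n ≤ ((k : ℝ) + 1) * n :=
    mul_le_mul_of_nonneg_right (Nat.lt_floor_add_one _).le hnpos.le
  have hlast : ((k : ℝ) + 1) ^ 2 * t ^ k ≤ (2 * L) ^ 2 * √n := by gcongr
  calc (1 / (4 * (t : ℝ)) - 2 * L / √n) * (n * L) = L / (2 * t) * n / 2 - 2 * L ^ 2 * √n := by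
        field_simp
        linear_combination (32 * t * L) * mul_self_sqrt hnpos.le
    _ ≤ m := by linarith

theorem tendsto_logb_div_sqrt_natCast :
    Tendsto (fun n : ℕ ↦ logb 2 n / √n) atTop (𝓝 0) := by
  have h := ((isLittleO_log_rpow_atTop one_half_pos).tendsto_div_nhds_zero.comp
    tendsto_natCast_atTop_atTop).div_const (log 2)
  simp only [zero_div] at h
  refine h.congr fun n ↦ ?_
  simp [logb, sqrt_eq_rpow, div_div, mul_comm]

end Asymptotics

theorem stmt_15 {W : Type*} [Fintype W] (H : SimpleGraph W)
    (hne : H.edgeSet.Nonempty)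
    (htri : ∀ x y : W, H.Adj x y → ∃ z, H.Adj x z ∧ H.Adj y z)
    (t : ℕ) (ht : Nat.card H.edgeSet ≤ t) :
    ∃ f : ℕ → ℝ, Filter.Tendsto f Filter.atTop (nhds 0) ∧
      ∀ n : ℕ, (1 / (4 * (t : ℝ)) + f n) * ((n : ℝ) * Real.logb 2 n) ≤
        (rainbowSatNum H t n : ℝ) := by
  have := hne.to_subtype
  have htpos : 0 < t := Nat.card_pos.trans_le ht
  refine ⟨fun n ↦ -(2 * Real.logb 2 n / √n), ?_, fun n ↦ ?_⟩
  · simpa [mul_div_assoc] using (tendsto_logb_div_sqrt_natCast.const_mul 2).neg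
  obtain ⟨G, c, hsat, hcard⟩ := exists_isRainbowSat_card_eq hne t n
  rw [← sub_eq_add_neg, ← hcard]
  exact mul_logb_le_of_forall_succ_mul_le htpos fun k ↦ by
    simpa using hsat.mul_card_le htri htpos k
end

section
/- For any r ≥ 3 and all n, sat(n, R(K_r)) ≤ 2(r-2)n, where sat(n, R(K_r)) denotes the rainbow saturation number of K_r with an unbounded palette of colours (colours taken from the natural numbers). -/
open SimpleGraph

/-!
For `n ≤ 2(r-2)+1` the complete graph in a single colour works. Otherwise take two cliques
`B₀`, `B₁` of size `r-2` and join every other vertex to all of `B₀ ∪ B₁`; the two cliques are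
joined to each other only when `r ≥ 4`. Edges between `B₀` and `B₁` get colour `0`, all other
edges get distinct colours, odd on edges meeting `B₀` and even on edges meeting `B₁`. The
remaining vertices are independent, so a `K_r` has at least `r-1` vertices in `B₀ ∪ B₁`, hence
meets both cliques and one of them twice: it has two edges of colour `0` (for `r = 3` it would
need an edge between `B₀` and `B₁`). A new edge `xy` outside `B₀ ∪ B₁` of colour `i` makes
`B_s ∪ {x, y}` a rainbow `K_r`, for the clique `B_s` whose colours have the other parity than
`i`. For `r = 3` a new edge between `B₀` and `B₁` forms a rainbow triangle with one of any two
outer vertices.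
-/

open Finset

section RainbowClique

variable {V : Type*} {G : SimpleGraph V} {c : Sym2 V → ℕ} {S : Finset V}

def IsRainbowClique (G : SimpleGraph V) (c : Sym2 V → ℕ) (S : Finset V) : Prop :=
  G.IsClique (S : Set V) ∧ Set.InjOn c {e | e ∈ S.sym2 ∧ ¬e.IsDiag}

theorem IsRainbowClique.color_ne (hS : IsRainbowClique G c S) {x y z : V} (hx : x ∈ S)
    (hy : y ∈ S) (hz : z ∈ S) (hxy : x ≠ y) (hxz : x ≠ z) (hyz : y ≠ z) :
    c s(x, z) ≠ c s(y, z) := fun h ↦ by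
  have := hS.2 ⟨mk_mem_sym2_iff.2 ⟨hx, hz⟩, by simpa⟩ ⟨mk_mem_sym2_iff.2 ⟨hy, hz⟩, by simpa⟩ h
  simp_all

theorem hasRainbowCopy_top_iff {W : Type*} [Fintype W] :
    HasRainbowCopy (⊤ : SimpleGraph W) G c ↔
      ∃ S : Finset V, #S = Fintype.card W ∧ IsRainbowClique G c S := by
  constructor
  · rintro ⟨f, hf⟩
    refine ⟨univ.map f.toEmbedding, by simp, ?_, ?_⟩
    · simpa using SimpleGraph.isClique_range_copy_top f.toCopy
    · rintro _ ⟨he₁, hd₁⟩ _ ⟨he₂, hd₂⟩ h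
      rw [sym2_map, mem_map] at he₁ he₂
      obtain ⟨e₁, -, rfl⟩ := he₁
      obtain ⟨e₂, -, rfl⟩ := he₂
      rw [Function.Embedding.sym2Map_apply, Sym2.isDiag_map f.toEmbedding.injective] at hd₁ hd₂
      rw [hf e₁ (by simpa using hd₁) e₂ (by simpa using hd₂) h]
  · rintro ⟨S, hcard, hclique, hinj⟩
    let g : W ↪ V := ((Fintype.equivFin W).trans (S.equivFinOfCardEq hcard).symm).toEmbedding.trans
      (Function.Embedding.subtype _)
    have hg : ∀ a, g a ∈ S := fun a ↦ Subtype.prop _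
    refine ⟨⟨g, fun {a b} ↦ ⟨fun h hab ↦ h.ne (congrArg g hab),
      fun h ↦ hclique (hg a) (hg b) (g.injective.ne h)⟩⟩, ?_⟩
    have hmem : ∀ e, Sym2.map g e ∈ S.sym2 := fun e ↦ mem_sym2_iff.2 fun v hv ↦ by
      obtain ⟨a, -, rfl⟩ := Sym2.mem_map.1 hv
      exact hg a
    intro e₁ he₁ e₂ he₂ h
    refine Sym2.map.injective g.injective (hinj ⟨hmem e₁, ?_⟩ ⟨hmem e₂, ?_⟩ h)
    · simpa [Sym2.isDiag_map g.injective] using he₁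
    · simpa [Sym2.isDiag_map g.injective] using he₂

theorem isRainbowClique_sup_edge [DecidableEq V] {x y : V} {i : ℕ}
    (hS : ∀ e ∈ S.sym2, ¬e.IsDiag → e ≠ s(x, y) → e ∈ G.edgeSet ∧ c e ≠ i)
    (hinj : Set.InjOn c {e | e ∈ S.sym2 ∧ ¬e.IsDiag ∧ e ≠ s(x, y)}) :
    IsRainbowClique (G ⊔ SimpleGraph.fromEdgeSet {s(x, y)})
      (fun e ↦ if e = s(x, y) then i else c e) S := by
  constructor
  · intro u hu v hv huv
    by_cases h : s(u, v) = s(x, y)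
    · exact Or.inr (SimpleGraph.fromEdgeSet_adj _ |>.2 ⟨h, huv⟩)
    · exact Or.inl (hS _ (mk_mem_sym2_iff.2 ⟨hu, hv⟩) (by simpa) h).1
  · rintro e₁ ⟨he₁, hd₁⟩ e₂ ⟨he₂, hd₂⟩ h
    by_cases h₁ : e₁ = s(x, y) <;> by_cases h₂ : e₂ = s(x, y) <;>
      simp only [h₁, h₂, if_true, if_false] at h
    · rw [h₁, h₂]
    · exact absurd h.symm (hS e₂ he₂ hd₂ h₂).2
    · exact absurd h (hS e₁ he₁ hd₁ h₁).2
    · exact hinj ⟨he₁, hd₁, h₁⟩ ⟨he₂, hd₂, h₂⟩ h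

theorem isRainbowSatInf_top_const [DecidableEq V] {W : Type*} [Fintype W]
    (hW : 3 ≤ Fintype.card W) (k : ℕ) :
    IsRainbowSatInf (⊤ : SimpleGraph W) (⊤ : SimpleGraph V) (fun _ ↦ k) := by
  refine ⟨fun h ↦ ?_, fun x y hxy hadj ↦ absurd hxy hadj⟩
  obtain ⟨S, hcard, hS⟩ := hasRainbowCopy_top_iff.1 h
  obtain ⟨x, hx, y, hy, z, hz, hxy, hxz, hyz⟩ := two_lt_card.1 (hcard ▸ hW)
  exact hS.color_ne hx hy hz hxy hxz hyz rfl

end RainbowClique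

theorem rainbowSatNumInf_le {W : Type*} {H : SimpleGraph W} {n m : ℕ} {G : SimpleGraph (Fin n)}
    {c : Sym2 (Fin n) → ℕ} (h : IsRainbowSatInf H G c) (hm : Nat.card G.edgeSet ≤ m) :
    rainbowSatNumInf H n ≤ m := by
  refine (Nat.sInf_le ?_).trans hm
  exact ⟨G, c, h, rfl⟩

theorem SimpleGraph.IsVertexCover.card_edgeFinset_le {V : Type*} [Fintype V] [DecidableEq V]
    {G : SimpleGraph V} [DecidableRel G.Adj] {A : Finset V} (hA : G.IsVertexCover A) :
    #G.edgeFinset ≤ #A * Fintype.card V := by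
  have hsub : G.edgeFinset ⊆ A.biUnion fun a ↦ G.incidenceFinset a := by
    intro e he
    induction e using Sym2.ind with
    | _ u v =>
      have huv := G.mem_edgeFinset.1 he
      rcases hA huv with hu | hv
      · exact mem_biUnion.2 ⟨u, hu, G.mem_incidenceFinset _ _ |>.2 ⟨huv, Sym2.mem_mk_left _ _⟩⟩
      · exact mem_biUnion.2 ⟨v, hv, G.mem_incidenceFinset _ _ |>.2 ⟨huv, Sym2.mem_mk_right _ _⟩⟩
  calc #G.edgeFinset ≤ ∑ a ∈ A, #(G.incidenceFinset a) := (card_le_card hsub).trans card_biUnion_le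
    _ ≤ #A * Fintype.card V := by
      refine sum_le_card_nsmul _ _ _ fun a _ ↦ ?_
      rw [G.card_incidenceFinset_eq_degree]
      exact (G.degree_lt_card_verts a).le

section Construction

/- `side v = some s` puts `v` into the clique `B_s`, `side v = none` into the independent set of
outer vertices. -/
variable {V : Type*} (side : V → Option Bool) (r : ℕ) (code : Sym2 V → ℕ)

def satGraph : SimpleGraph V :=
  SimpleGraph.fromEdgeSet {e | e.map side ≠ s(none, none) ∧
    (e.map side = s(some false, some true) → 4 ≤ r)}

def satColoring (e : Sym2 V) : ℕ :=
  if e.map side = s(some false, some true) then 0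
  else 2 * code e + 1 + if some true ∈ e.map side then 1 else 0

def sideEdges (s : Bool) : Set (Sym2 V) :=
  {e | e.map side = s(some s, some s) ∨ e.map side = s(some s, none)}

variable {side r code}

theorem sideEdges_subset_edgeSet {s : Bool} {e : Sym2 V} (he : e ∈ sideEdges side s)
    (hd : ¬e.IsDiag) : e ∈ (satGraph side r).edgeSet := by
  rw [satGraph, SimpleGraph.edgeSet_fromEdgeSet]
  refine ⟨?_, hd⟩
  rcases he with h | h <;> cases s <;> simp [h]

theorem satColoring_of_mem_sideEdges {s : Bool} {e : Sym2 V} (he : e ∈ sideEdges side s) :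
    satColoring side code e = 2 * code e + 1 + s.toNat := by
  rcases he with h | h <;> cases s <;> simp [satColoring, h]

theorem satColoring_cross {x y : V} {s : Bool} (hx : side x = some s) (hy : side y = some !s) :
    satColoring side code s(x, y) = 0 := by
  cases s <;> simp [satColoring, hx, hy, Sym2.eq_swap]

theorem injOn_satColoring_sideEdges (hcode : Function.Injective code) (s : Bool) :
    Set.InjOn (satColoring side code) (sideEdges side s) := fun e₁ he₁ e₂ he₂ h ↦ by
  rw [satColoring_of_mem_sideEdges he₁, satColoring_of_mem_sideEdges he₂] at h
  exact hcode (by omega)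

theorem exists_bool_two_mul_add_ne (i : ℕ) : ∃ s : Bool, ∀ k, 2 * k + 1 + s.toNat ≠ i := by
  rcases Nat.even_or_odd i with ⟨m, rfl⟩ | ⟨m, rfl⟩
  · exact ⟨false, fun k ↦ by rw [Bool.toNat_false]; omega⟩
  · exact ⟨true, fun k ↦ by rw [Bool.toNat_true]; omega⟩

theorem mem_sideEdges_of_mem_sym2 [Fintype V] [DecidableEq V] {s : Bool} {x y : V}
    (hx : side x = none) (hy : side y = none) {e : Sym2 V}
    (he : e ∈ (insert x (insert y ({v | side v = some s} : Finset V))).sym2) (hd : ¬e.IsDiag)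
    (hexy : e ≠ s(x, y)) : e ∈ sideEdges side s := by
  induction e using Sym2.ind with
  | _ u v =>
    rw [mk_mem_sym2_iff] at he
    simp only [mem_insert, mem_filter, mem_univ, true_and] at he
    obtain ⟨hu | hu | hu, hv | hv | hv⟩ := he <;> subst_vars <;>
      simp_all [sideEdges, Sym2.eq_swap]

theorem hasRainbowCopy_satGraph_sup_edge_of_side_eq_none [Fintype V] [DecidableEq V]
    (hr : 2 ≤ r) (hcode : Function.Injective code) (hB : ∀ s, #{v | side v = some s} = r - 2)
    {x y : V} (hxy : x ≠ y) (hx : side x = none) (hy : side y = none) (i : ℕ) :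
    HasRainbowCopy (⊤ : SimpleGraph (Fin r)) (satGraph side r ⊔ SimpleGraph.fromEdgeSet {s(x, y)})
      (fun e ↦ if e = s(x, y) then i else satColoring side code e) := by
  obtain ⟨s, hs⟩ := exists_bool_two_mul_add_ne i
  have hcard : #(insert x (insert y ({v | side v = some s} : Finset V))) = r := by
    rw [card_insert_of_notMem (by simp [hxy, hx]), card_insert_of_notMem (by simp [hy]), hB]
    omega
  rw [hasRainbowCopy_top_iff, Fintype.card_fin]
  refine ⟨_, hcard, isRainbowClique_sup_edge (fun e he hd hexy ↦ ?_) ?_⟩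
  · have hes := mem_sideEdges_of_mem_sym2 hx hy he hd hexy
    exact ⟨sideEdges_subset_edgeSet hes hd, satColoring_of_mem_sideEdges hes ▸ hs _⟩
  · exact (injOn_satColoring_sideEdges hcode s).mono fun e ⟨he, hd, hexy⟩ ↦
      mem_sideEdges_of_mem_sym2 hx hy he hd hexy

theorem hasRainbowCopy_satGraph_sup_edge_of_cross [DecidableEq V] (hcode : Function.Injective code)
    {x y z₁ z₂ : V} (hx : side x = some false) (hy : side y = some true) (hz : z₁ ≠ z₂)
    (hz₁ : side z₁ = none) (hz₂ : side z₂ = none) (i : ℕ) :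
    HasRainbowCopy (⊤ : SimpleGraph (Fin 3)) (satGraph side r ⊔ SimpleGraph.fromEdgeSet {s(x, y)})
      (fun e ↦ if e = s(x, y) then i else satColoring side code e) := by
  have hside : ∀ z, side z = none →
      s(x, z) ∈ sideEdges side false ∧ s(y, z) ∈ sideEdges side true :=
    fun z hz ↦ by simp [sideEdges, hx, hy, hz]
  obtain ⟨z, hz, hcx, hcy⟩ : ∃ z, side z = none ∧
      satColoring side code s(x, z) ≠ i ∧ satColoring side code s(y, z) ≠ i := by
    have hx₁₂ : code s(x, z₁) ≠ code s(x, z₂) := hcode.ne (Sym2.congr_right.not.2 hz)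
    have hy₁₂ : code s(y, z₁) ≠ code s(y, z₂) := hcode.ne (Sym2.congr_right.not.2 hz)
    have hx₁ := satColoring_of_mem_sideEdges (code := code) (hside _ hz₁).1
    have hy₁ := satColoring_of_mem_sideEdges (code := code) (hside _ hz₁).2
    have hx₂ := satColoring_of_mem_sideEdges (code := code) (hside _ hz₂).1
    have hy₂ := satColoring_of_mem_sideEdges (code := code) (hside _ hz₂).2
    simp only [Bool.toNat_false, Bool.toNat_true] at hx₁ hy₁ hx₂ hy₂
    by_cases h : satColoring side code s(x, z₁) ≠ i ∧ satColoring side code s(y, z₁) ≠ i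
    · exact ⟨z₁, hz₁, h⟩
    · exact ⟨z₂, hz₂, by omega, by omega⟩
  have hxy : x ≠ y := fun h ↦ by simp_all
  have hxz : x ≠ z := fun h ↦ by simp_all
  have hyz : y ≠ z := fun h ↦ by simp_all
  have hpairs : ∀ e ∈ ({x, y, z} : Finset V).sym2, ¬e.IsDiag → e ≠ s(x, y) →
      e = s(x, z) ∨ e = s(y, z) := by
    intro e he hd hexy
    induction e using Sym2.ind with
    | _ u v =>
      rw [mk_mem_sym2_iff] at he
      simp only [mem_insert, mem_singleton] at he
      obtain ⟨hu | hu | hu, hv | hv | hv⟩ := he <;> subst_vars <;> simp_all [Sym2.eq_swap]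
  rw [hasRainbowCopy_top_iff, Fintype.card_fin]
  refine ⟨{x, y, z}, by simp [hxy, hxz, hyz], isRainbowClique_sup_edge (fun e he hd hexy ↦ ?_) ?_⟩
  · rcases hpairs e he hd hexy with rfl | rfl
    · exact ⟨sideEdges_subset_edgeSet (hside z hz).1 hd, hcx⟩
    · exact ⟨sideEdges_subset_edgeSet (hside z hz).2 hd, hcy⟩
  · refine Set.InjOn.mono (s₂ := {s(x, z), s(y, z)}) (fun e ⟨he, hd, hexy⟩ ↦ hpairs e he hd hexy) ?_
    rw [Set.injOn_pair, satColoring_of_mem_sideEdges (hside z hz).1,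
      satColoring_of_mem_sideEdges (hside z hz).2]
    simp only [Bool.toNat_false, Bool.toNat_true]
    omega

theorem satGraph_adj_iff {x y : V} : (satGraph side r).Adj x y ↔ x ≠ y ∧
    s(side x, side y) ≠ s(none, none) ∧ (s(side x, side y) = s(some false, some true) → 4 ≤ r) := by
  rw [satGraph, SimpleGraph.fromEdgeSet_adj, Set.mem_ofPred_eq, Sym2.map_mk]
  tauto

theorem satGraph_not_hasRainbowCopy [Fintype V] [DecidableEq V] (hr : 3 ≤ r)
    (hB : ∀ s, #{v | side v = some s} ≤ r - 2) :
    ¬HasRainbowCopy (⊤ : SimpleGraph (Fin r)) (satGraph side r) (satColoring side code) := by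
  rw [hasRainbowCopy_top_iff, Fintype.card_fin]
  rintro ⟨S, hcard, hS⟩
  have hout : #{v ∈ S | side v = none} ≤ 1 := card_le_one.2 fun a ha b hb ↦ by
    by_contra hab
    simp only [mem_filter] at ha hb
    simpa [ha.2, hb.2] using (satGraph_adj_iff.1 (hS.1 ha.1 hb.1 hab)).2.1
  have hin : ∀ s, #{v ∈ S | side v = some s} ≤ r - 2 := fun s ↦
    (card_le_card (filter_subset_filter _ (subset_univ S))).trans (hB s)
  have hfalse := hin false
  have htrue := hin true
  have hsum : #S = #{v ∈ S | side v = none} + #{v ∈ S | side v = some false} +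
      #{v ∈ S | side v = some true} := by
    rw [card_eq_sum_card_fiberwise (f := side) (t := univ) (fun _ _ ↦ mem_univ _),
      Fintype.sum_option, Fintype.sum_bool]
    ring
  have hmono : ∀ s, ∀ b₁ ∈ S, ∀ b₂ ∈ S, ∀ d ∈ S, b₁ ≠ b₂ → side b₁ = some s →
      side b₂ = some s → side d = some !s → False := by
    intro s b₁ h₁ b₂ h₂ d hd h₁₂ hs₁ hs₂ hsd
    refine hS.color_ne h₁ h₂ hd h₁₂ (fun h ↦ by simp_all) (fun h ↦ by simp_all) ?_
    rw [satColoring_cross hs₁ hsd, satColoring_cross hs₂ hsd]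
  obtain ⟨b, hb⟩ := card_pos.1 (show 0 < #{v ∈ S | side v = some false} by omega)
  obtain ⟨d, hd⟩ := card_pos.1 (show 0 < #{v ∈ S | side v = some true} by omega)
  simp only [mem_filter] at hb hd
  have h4 : 4 ≤ r :=
    (satGraph_adj_iff.1 (hS.1 hb.1 hd.1 fun h ↦ by simp_all)).2.2 (by simp [hb.2, hd.2])
  rcases (show 1 < #{v ∈ S | side v = some false} ∨ 1 < #{v ∈ S | side v = some true} by omega)
    with h | h <;> obtain ⟨b₁, h₁, b₂, h₂, h₁₂⟩ := one_lt_card.1 h <;>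
    simp only [mem_filter] at h₁ h₂
  · exact hmono false b₁ h₁.1 b₂ h₂.1 d hd.1 h₁₂ h₁.2 h₂.2 hd.2
  · exact hmono true b₁ h₁.1 b₂ h₂.1 b hb.1 h₁₂ h₁.2 h₂.2 hb.2

theorem isRainbowSatInf_satGraph [Fintype V] [DecidableEq V] (hr : 3 ≤ r)
    (hcode : Function.Injective code) (hB : ∀ s, #{v | side v = some s} = r - 2) {z₁ z₂ : V}
    (hz : z₁ ≠ z₂) (hz₁ : side z₁ = none) (hz₂ : side z₂ = none) :
    IsRainbowSatInf (⊤ : SimpleGraph (Fin r)) (satGraph side r) (satColoring side code) := by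
  refine ⟨satGraph_not_hasRainbowCopy hr fun s ↦ (hB s).le, fun x y hxy hadj i ↦ ?_⟩
  rw [satGraph_adj_iff] at hadj
  push Not at hadj
  by_cases hnone : s(side x, side y) = s(none, none)
  · simp only [Sym2.eq_iff, or_self] at hnone
    exact hasRainbowCopy_satGraph_sup_edge_of_side_eq_none (by omega) hcode hB hxy hnone.1 hnone.2 i
  · obtain ⟨hcross, hr4⟩ := hadj hxy hnone
    obtain rfl : r = 3 := by omega
    rcases Sym2.eq_iff.1 hcross with ⟨hx, hy⟩ | ⟨hx, hy⟩
    · exact hasRainbowCopy_satGraph_sup_edge_of_cross hcode hx hy hz hz₁ hz₂ i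
    · rw [Sym2.eq_swap]
      exact hasRainbowCopy_satGraph_sup_edge_of_cross hcode hy hx hz hz₁ hz₂ i

theorem card_edgeSet_satGraph_le [Fintype V] {k : ℕ} (hB : ∀ s, #{v | side v = some s} ≤ k) :
    Nat.card (satGraph side r).edgeSet ≤ 2 * k * Fintype.card V := by
  classical
  have hcover : (satGraph side r).IsVertexCover ({v | side v ≠ none} : Finset V) :=
    fun x y h ↦ by
      have := (satGraph_adj_iff.1 h).2.1
      by_contra! hxy
      simp_all
  have hA : #({v | side v ≠ none} : Finset V) ≤ 2 * k := by
    calc #({v | side v ≠ none} : Finset V)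
        ≤ #(({v | side v = some false} : Finset V) ∪ ({v | side v = some true} : Finset V)) :=
          card_le_card fun v hv ↦ by cases h : side v <;> simp_all
      _ ≤ 2 * k := by grw [card_union_le, hB, hB]; omega
  rw [Nat.card_eq_fintype_card, SimpleGraph.card_edgeSet]
  exact hcover.card_edgeFinset_le.trans (Nat.mul_le_mul_right _ hA)

end Construction

def finSide (k : ℕ) {n : ℕ} (v : Fin n) : Option Bool :=
  if v.val < 2 * k then some (k ≤ v.val) else none

theorem finSide_eq_some_false {k n : ℕ} {v : Fin n} : finSide k v = some false ↔ v.val < k := by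
  unfold finSide; split_ifs <;> grind

theorem finSide_eq_some_true {k n : ℕ} {v : Fin n} :
    finSide k v = some true ↔ k ≤ v.val ∧ v.val < 2 * k := by
  unfold finSide; split_ifs <;> grind

theorem finSide_eq_none {k n : ℕ} {v : Fin n} : finSide k v = none ↔ 2 * k ≤ v.val := by
  unfold finSide; split_ifs <;> grind

theorem card_finSide {k n : ℕ} (h : 2 * k ≤ n) (s : Bool) :
    #{v : Fin n | finSide k v = some s} = k := by
  cases s
  · simp only [finSide_eq_some_false, Fin.card_filter_val_lt]
    omega
  · have : ({v | finSide k v = some true} : Finset (Fin n)) =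
        ({v | v < 2 * k} : Finset (Fin n)) \ ({v | v < k} : Finset (Fin n)) := by
      ext v
      simp [finSide_eq_some_true, and_comm]
    have hsub : ({v | v < k} : Finset (Fin n)) ⊆ ({v | v < 2 * k} : Finset (Fin n)) := fun v ↦ by
      simp only [mem_filter, mem_univ, true_and]
      omega
    rw [this, card_sdiff_of_subset hsub, Fin.card_filter_val_lt, Fin.card_filter_val_lt]
    omega

theorem stmt_17 (r : ℕ) (hr : 3 ≤ r) (n : ℕ) :
    rainbowSatNumInf (⊤ : SimpleGraph (Fin r)) n ≤ 2 * (r - 2) * n := by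
  rcases le_or_gt n (2 * (r - 2) + 1) with hn | hn
  · refine rainbowSatNumInf_le (isRainbowSatInf_top_const (by simpa using hr) 0) ?_
    rw [Nat.card_eq_fintype_card, SimpleGraph.card_edgeSet,
      SimpleGraph.card_edgeFinset_top_eq_card_choose_two, Fintype.card_fin, Nat.choose_two_right]
    calc n * (n - 1) / 2 ≤ n * (n - 1) := Nat.div_le_self _ _
      _ ≤ n * (2 * (r - 2)) := Nat.mul_le_mul_left _ (by omega)
      _ = 2 * (r - 2) * n := Nat.mul_comm _ _
  · obtain ⟨code, hcode⟩ := Countable.exists_injective_nat (Sym2 (Fin n))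
    have hB := card_finSide (k := r - 2) (n := n) (by omega)
    refine rainbowSatNumInf_le (isRainbowSatInf_satGraph hr hcode hB
      (z₁ := ⟨2 * (r - 2), by omega⟩) (z₂ := ⟨2 * (r - 2) + 1, by omega⟩) (by simp)
      (finSide_eq_none.2 le_rfl) (finSide_eq_none.2 (by simp))) ?_
    simpa using card_edgeSet_satGraph_le (r := r) fun s ↦ (hB s).le
end
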